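/- arXiv:2301.06105 — 2 statements merged into one kernel-verified Lean document; each statement's English description precedes it below -/
import Mathlib

section
/- Let P be an (s,t)-path in a directed graph G, let p be the smallest index such that the layer L_p contains more than one vertex of P, and let u be the first vertex of P lying in L_p. Then the prefix subpath of P from s to u is a shortest (s,u)-path, i.e., it has length dist_G(s,u) = p. -/
/-!
Along `P` the distance from `s` starts at `0` and grows by at most one per edge, so it stays
below `p` until it first reaches `p` at index `i`. Below layer `p` every layer meets `P` at most
once, hence the `i` distinct vertices before `u` sit in distinct layers among `0, …, p - 1`, giving
`i ≤ p`; the prefix itself is an `(s, u)`-path of length `i`, giving `p ≤ i`.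
-/

variable {V : Type*}

/-- `l` is a (nonempty) directed walk in the digraph `G`. -/
def IsWalk (G : V → V → Prop) : List V → Prop
  | [] => False
  | [_] => True
  | a :: b :: l => G a b ∧ IsWalk G (b :: l)

/-- `l` is a simple directed path in `G`. -/
def IsPath (G : V → V → Prop) (l : List V) : Prop := IsWalk G l ∧ l.Nodup

/-- `l` is a walk from `s` to `t` in `G`. -/
def IsWalkFrom (G : V → V → Prop) (s t : V) (l : List V) : Prop :=
  IsWalk G l ∧ l.head? = some s ∧ l.getLast? = some t

/-- `l` is a simple path from `s` to `t` in `G`. -/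
def IsPathFrom (G : V → V → Prop) (s t : V) (l : List V) : Prop :=
  IsPath G l ∧ l.head? = some s ∧ l.getLast? = some t

/-- The length (number of edges) of a path given as a vertex list. -/
def pathLen (l : List V) : ℕ := l.length - 1

/-- Directed shortest-path distance (`⊤` if unreachable). -/
noncomputable def ddist (G : V → V → Prop) (s t : V) : ℕ∞ :=
  sInf {n : ℕ∞ | ∃ l, IsPathFrom G s t l ∧ (pathLen l : ℕ∞) = n}

section Walks

variable {G : V → V → Prop} {s t a b : V} {l : List V}

theorem isWalk_iff_ne_nil_and_isChain : ∀ {l : List V}, IsWalk G l ↔ l ≠ [] ∧ l.IsChain G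
  | [] => by simp [IsWalk]
  | [a] => by simp [IsWalk]
  | a :: b :: l => by
    rw [IsWalk, isWalk_iff_ne_nil_and_isChain, List.isChain_cons_cons]
    exact ⟨fun h => ⟨by simp, h.1, h.2.2⟩, fun h => ⟨h.2.1, by simp, h.2.2⟩⟩

theorem IsWalk.rel_getD (h : IsWalk G l) (x : V) {m : ℕ} (hm : m + 1 < l.length) :
    G (l.getD m x) (l.getD (m + 1) x) := by
  have hc := List.isChain_iff_getElem.mp (isWalk_iff_ne_nil_and_isChain.mp h).2 m hm
  rwa [List.getD_eq_getElem _ _ (by omega), List.getD_eq_getElem _ _ hm]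

theorem List.Nodup.getD_inj (h : l.Nodup) (x : V) {m₁ m₂ : ℕ} (hm₁ : m₁ < l.length)
    (hm₂ : m₂ < l.length) (heq : l.getD m₁ x = l.getD m₂ x) : m₁ = m₂ := by
  rw [List.getD_eq_getElem _ _ hm₁, List.getD_eq_getElem _ _ hm₂] at heq
  exact h.getElem_inj_iff.mp heq

theorem List.getD_mem_of_lt (x : V) {m : ℕ} (hm : m < l.length) : l.getD m x ∈ l := by
  rw [List.getD_eq_getElem _ _ hm]
  exact List.getElem_mem hm

theorem pathLen_take {i : ℕ} (hi : i < l.length) : pathLen (l.take (i + 1)) = i := by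
  simp only [pathLen, List.length_take]
  omega

theorem IsPathFrom.take (h : IsPathFrom G s t l) {i : ℕ} (hi : i < l.length) :
    IsPathFrom G s (l.getD i s) (l.take (i + 1)) := by
  obtain ⟨⟨hw, hnd⟩, hhead, -⟩ := h
  obtain ⟨-, hchain⟩ := isWalk_iff_ne_nil_and_isChain.mp hw
  have hlen : (l.take (i + 1)).length = i + 1 := by
    rw [List.length_take]
    omega
  refine ⟨⟨isWalk_iff_ne_nil_and_isChain.mpr ⟨?_, hchain.take _⟩,
    hnd.sublist (List.take_sublist _ _)⟩, ?_, ?_⟩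
  · intro hnil
    simp [hnil] at hlen
  · cases l with
    | nil => simp at hi
    | cons a l => simpa [List.take_succ_cons] using hhead
  · rw [List.getLast?_eq_getElem?, hlen, Nat.add_sub_cancel, List.getElem?_take,
      if_pos (by omega), List.getElem?_eq_getElem hi, List.getD_eq_getElem _ _ hi]

theorem IsPathFrom.concat (h : IsPathFrom G s a l) (hab : G a b) (hb : b ∉ l) :
    IsPathFrom G s b (l ++ [b]) := by
  obtain ⟨⟨hw, hnd⟩, hhead, hlast⟩ := h
  obtain ⟨hne, hchain⟩ := isWalk_iff_ne_nil_and_isChain.mp hw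
  refine ⟨⟨isWalk_iff_ne_nil_and_isChain.mpr ⟨by simp, ?_⟩, ?_⟩, ?_, List.getLast?_concat⟩
  · refine List.isChain_append.mpr ⟨hchain, List.isChain_singleton _, ?_⟩
    intro x hx y hy
    rw [hlast, Option.mem_some_iff] at hx
    simp only [List.head?_cons, Option.mem_some_iff] at hy
    exact hx ▸ hy ▸ hab
  · exact List.nodup_append.mpr ⟨hnd, List.nodup_singleton _, by grind⟩
  · rw [List.head?_append, hhead]
    rfl

end Walks

section Distance

variable {G : V → V → Prop} {s t a b : V} {l : List V}

theorem ddist_le_pathLen (h : IsPathFrom G s t l) : ddist G s t ≤ (pathLen l : ℕ∞) :=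
  sInf_le ⟨l, h, rfl⟩

theorem exists_isPathFrom_pathLen_eq_ddist (h : ddist G s t ≠ ⊤) :
    ∃ l, IsPathFrom G s t l ∧ (pathLen l : ℕ∞) = ddist G s t := by
  have hne : {n : ℕ∞ | ∃ l, IsPathFrom G s t l ∧ (pathLen l : ℕ∞) = n}.Nonempty :=
    Set.nonempty_iff_ne_empty.mpr fun hempty => h (by rw [ddist, hempty, sInf_empty])
  exact csInf_mem hne

theorem ddist_le_ddist_add_one (hab : G a b) : ddist G s b ≤ ddist G s a + 1 := by
  classical
  rcases eq_or_ne (ddist G s a) ⊤ with htop | htop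
  · simp [htop]
  obtain ⟨l, hl, hlen⟩ := exists_isPathFrom_pathLen_eq_ddist htop
  rw [← hlen]
  by_cases hb : b ∈ l
  · have hidx : l.idxOf b < l.length := List.idxOf_lt_length_iff.mpr hb
    have hpath := hl.take hidx
    rw [List.getD_eq_getElem _ _ hidx, List.getElem_idxOf hidx] at hpath
    calc ddist G s b ≤ (pathLen (l.take (l.idxOf b + 1)) : ℕ∞) := ddist_le_pathLen hpath
      _ ≤ pathLen l + 1 := by
        rw [pathLen_take hidx]
        exact_mod_cast (by unfold pathLen; omega)
  · have hne : l ≠ [] := by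
      rintro rfl
      simp [IsPathFrom] at hl
    calc ddist G s b ≤ (pathLen (l ++ [b]) : ℕ∞) := ddist_le_pathLen (hl.concat hab hb)
      _ = pathLen l + 1 := by
        have := List.length_pos_iff.mpr hne
        simp only [pathLen, List.length_append, List.length_singleton]
        push_cast [show l.length + 1 - 1 = l.length - 1 + 1 by omega]
        rfl

theorem IsPathFrom.ddist_getD_le (h : IsPathFrom G s t l) {m : ℕ} (hm : m < l.length) :
    ddist G s (l.getD m s) ≤ m :=
  (ddist_le_pathLen (h.take hm)).trans_eq (by rw [pathLen_take hm])

end Distance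

theorem ENat.forall_lt_of_forall_ne_of_le_add_one {f : ℕ → ℕ∞} {c : ℕ∞} {i : ℕ}
    (h₀ : f 0 ≤ c) (hstep : ∀ m, m + 1 < i → f (m + 1) ≤ f m + 1) (hne : ∀ m < i, f m ≠ c) :
    ∀ m < i, f m < c := by
  intro m
  induction m with
  | zero => exact fun hi => lt_of_le_of_ne h₀ (hne 0 hi)
  | succ m ih =>
    intro hm
    have hlt := ih (by omega)
    have hsucc : f m + 1 ≤ c := (ENat.add_one_le_iff (hlt.trans_le le_top).ne).mpr hlt
    exact lt_of_le_of_ne ((hstep m hm).trans hsucc) (hne _ hm)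

theorem ENat.le_of_injOn_lt {f : ℕ → ℕ∞} {i p : ℕ} (hlt : ∀ m < i, f m < p)
    (hinj : ∀ m₁ < i, ∀ m₂ < i, f m₁ = f m₂ → m₁ = m₂) : i ≤ p := by
  have hfin : ∀ m < i, f m ≠ ⊤ := fun m hm => ((hlt m hm).trans_le le_top).ne
  have hcard := Finset.card_le_card_of_injOn (fun m => (f m).toNat)
    (s := Finset.range i) (t := Finset.range p) (fun m hm => ?_) (fun m₁ hm₁ m₂ hm₂ heq => ?_)
  · simpa using hcard
  · simp only [Finset.coe_range, Set.mem_Iio] at hm ⊢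
    exact_mod_cast (ENat.natCast_toNat (hfin m hm)).symm ▸ hlt m hm
  · simp only [Finset.coe_range, Set.mem_Iio] at hm₁ hm₂
    exact hinj m₁ hm₁ m₂ hm₂ <| by
      rw [← ENat.natCast_toNat (hfin m₁ hm₁), ← ENat.natCast_toNat (hfin m₂ hm₂)]
      exact congrArg _ heq

theorem stmt_1_general (G : V → V → Prop) (s t : V) (P : List V) (p i : ℕ)
    (hP : IsPathFrom G s t P)
    (hpmin : ∀ q : ℕ, q < p →
      ¬ ∃ a ∈ P, ∃ b ∈ P, a ≠ b ∧ ddist G s a = (q : ℕ∞) ∧ ddist G s b = (q : ℕ∞))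
    (hi : i < P.length)
    (hiu : ddist G s (P.getD i s) = (p : ℕ∞))
    (hifirst : ∀ m < i, ddist G s (P.getD m s) ≠ (p : ℕ∞)) :
    IsPathFrom G s (P.getD i s) (P.take (i+1)) ∧
    (pathLen (P.take (i+1)) : ℕ∞) = ddist G s (P.getD i s) ∧
    pathLen (P.take (i+1)) = p := by
  have hpi : p ≤ i := by exact_mod_cast hiu ▸ hP.ddist_getD_le hi
  have hlt : ∀ m < i, ddist G s (P.getD m s) < p :=
    ENat.forall_lt_of_forall_ne_of_le_add_one
      ((hP.ddist_getD_le (by omega)).trans (by exact_mod_cast p.zero_le))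
      (fun m hm => ddist_le_ddist_add_one (hP.1.1.rel_getD s (by omega))) hifirst
  have hip : i ≤ p := ENat.le_of_injOn_lt hlt fun m₁ hm₁ m₂ hm₂ heq => by
    by_contra hne
    have hfin := ((hlt m₁ hm₁).trans_le le_top).ne
    refine hpmin _ (by exact_mod_cast (ENat.natCast_toNat hfin).symm ▸ hlt m₁ hm₁)
      ⟨_, List.getD_mem_of_lt s (by omega), _, List.getD_mem_of_lt s (by omega),
        fun h => hne (hP.1.2.getD_inj s (by omega) (by omega) h),
        (ENat.natCast_toNat hfin).symm, heq ▸ (ENat.natCast_toNat hfin).symm⟩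
  obtain rfl : i = p := le_antisymm hip hpi
  exact ⟨hP.take hi, by rw [pathLen_take hi, hiu], pathLen_take hi⟩

theorem stmt_1 (G : V → V → Prop) (s t : V) (P : List V) (p i : ℕ)
    (hP : IsPathFrom G s t P)
    (hlong : ddist G s t < (pathLen P : ℕ∞))
    (hpmul : ∃ a ∈ P, ∃ b ∈ P, a ≠ b ∧ ddist G s a = (p : ℕ∞) ∧ ddist G s b = (p : ℕ∞))
    (hpmin : ∀ q : ℕ, q < p →
      ¬ ∃ a ∈ P, ∃ b ∈ P, a ≠ b ∧ ddist G s a = (q : ℕ∞) ∧ ddist G s b = (q : ℕ∞))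
    (hi : i < P.length)
    (hiu : ddist G s (P.getD i s) = (p : ℕ∞))
    (hifirst : ∀ m < i, ddist G s (P.getD m s) ≠ (p : ℕ∞)) :
    IsPathFrom G s (P.getD i s) (P.take (i+1)) ∧
    (pathLen (P.take (i+1)) : ℕ∞) = ddist G s (P.getD i s) ∧
    pathLen (P.take (i+1)) = p :=
  stmt_1_general G s t P p i hP hpmin hi hiu hifirst
end

section
/- For every positive integer k, the central-type binomial coefficient satisfies C(4k, k) ≤ (256/27)^k. -/
lemma aux_key (k : ℕ) :
    ((Nat.choose (4*k+4) (k+1) : ℕ) : ℝ) * ((k+1)*(3*k+1)*(3*k+2)*(3*k+3)) =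
    ((4*k+1)*(4*k+2)*(4*k+3)*(4*k+4)) * ((Nat.choose (4*k) k : ℕ) : ℝ) := by
  have h1 := Nat.choose_mul_factorial_mul_factorial (show k ≤ 4*k by omega)
  have h2 := Nat.choose_mul_factorial_mul_factorial (show k+1 ≤ 4*k+4 by omega)
  rw [show 4*k - k = 3*k by omega] at h1
  rw [show 4*k+4 - (k+1) = 3*k+3 by omega] at h2
  have e1 : ((4*k+4).factorial : ℝ) =
      (4*k+1)*(4*k+2)*(4*k+3)*(4*k+4) * ((4*k).factorial : ℝ) := by
    rw [show 4*k+4 = (4*k+3)+1 by ring, Nat.factorial_succ,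
        show 4*k+3 = (4*k+2)+1 by ring, Nat.factorial_succ,
        show 4*k+2 = (4*k+1)+1 by ring, Nat.factorial_succ,
        Nat.factorial_succ]
    push_cast; ring
  have e2 : ((3*k+3).factorial : ℝ) =
      (3*k+1)*(3*k+2)*(3*k+3) * ((3*k).factorial : ℝ) := by
    rw [show 3*k+3 = (3*k+2)+1 by ring, Nat.factorial_succ,
        show 3*k+2 = (3*k+1)+1 by ring, Nat.factorial_succ,
        Nat.factorial_succ]
    push_cast; ring
  have e3 : ((k+1).factorial : ℝ) = (k+1) * (k.factorial : ℝ) := by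
    rw [Nat.factorial_succ]; push_cast; ring
  have h1' : ((Nat.choose (4*k) k : ℕ) : ℝ) * (k.factorial : ℝ) * ((3*k).factorial : ℝ)
      = ((4*k).factorial : ℝ) := by exact_mod_cast congrArg (Nat.cast : ℕ → ℝ) h1
  have h2' : ((Nat.choose (4*k+4) (k+1) : ℕ) : ℝ) * ((k+1).factorial : ℝ) * ((3*k+3).factorial : ℝ)
      = ((4*k+4).factorial : ℝ) := by exact_mod_cast congrArg (Nat.cast : ℕ → ℝ) h2
  rw [e1, e2, e3, ← h1'] at h2'
  have hne : (k.factorial : ℝ) * ((3*k).factorial : ℝ) ≠ 0 := by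
    positivity
  apply mul_right_cancel₀ hne
  nlinarith [h2']

lemma aux_main (k : ℕ) :
    ((Nat.choose (4*k) k : ℕ) : ℝ) * 27^k ≤ 256^k := by
  induction k with
  | zero => norm_num
  | succ n ih =>
    have hkey := aux_key n
    have hpoly : (27:ℝ) * ((4*n+1)*(4*n+2)*(4*n+3)*(4*n+4))
        ≤ 256 * ((n+1)*(3*n+1)*(3*n+2)*(3*n+3)) := by
      have : (0:ℝ) ≤ (n:ℝ) := Nat.cast_nonneg n
      nlinarith [sq_nonneg ((n:ℝ)), sq_nonneg ((n:ℝ)+1)]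
    have hD : (0:ℝ) < ((n:ℝ)+1)*(3*n+1)*(3*n+2)*(3*n+3) := by positivity
    have hpow : (0:ℝ) < (256:ℝ)^n := by positivity
    have hchoose : (0:ℝ) ≤ ((Nat.choose (4*n) n : ℕ) : ℝ) := Nat.cast_nonneg _
    rw [show 4*(n+1) = 4*n+4 by ring]
    rw [pow_succ, pow_succ]
    apply le_of_mul_le_mul_right _ hD
    calc ((Nat.choose (4*n+4) (n+1) : ℕ) : ℝ) * (27^n * 27) * (((n:ℝ)+1)*(3*n+1)*(3*n+2)*(3*n+3))
        = ((4*n+1)*(4*n+2)*(4*n+3)*(4*n+4)) * ((Nat.choose (4*n) n : ℕ) : ℝ) * (27^n * 27) := by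
          push_cast at hkey ⊢; linear_combination (27^n*27 : ℝ) * hkey
      _ ≤ (256 * ((n+1)*(3*n+1)*(3*n+2)*(3*n+3)) / 27) * (((Nat.choose (4*n) n : ℕ) : ℝ) * 27^n) * 27 := by
          rw [div_mul_eq_mul_div, div_mul_eq_mul_div, le_div_iff₀ (by norm_num : (0:ℝ) < 27)]
          nlinarith [mul_nonneg hchoose (le_of_lt (pow_pos (by norm_num : (0:ℝ)<27) n)), hpoly,
            mul_le_mul_of_nonneg_right hpoly (mul_nonneg hchoose (le_of_lt (pow_pos (by norm_num : (0:ℝ)<27) n)))]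
      _ ≤ (256 * ((n+1)*(3*n+1)*(3*n+2)*(3*n+3)) / 27) * (256^n) * 27 := by
          apply mul_le_mul_of_nonneg_right _ (by norm_num)
          apply mul_le_mul_of_nonneg_left ih (by positivity)
      _ = 256^n * 256 * (((n:ℝ)+1)*(3*n+1)*(3*n+2)*(3*n+3)) := by ring

theorem stmt_7 (k : ℕ) (hk : 0 < k) :
    ((Nat.choose (4*k) k : ℕ) : ℝ) ≤ (256/27 : ℝ)^k := by
  have h := aux_main k
  rw [div_pow, le_div_iff₀ (by positivity : (0:ℝ) < 27^k)]
  linarith [h]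
end
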